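/- Semantic equation for assignment: for every concrete well-formed state σ, variable x, expression e and WHILE statement s with vars(x := e; s) ⊆ dom(σ), letting σ' = σ[x ↦ val_σ(e)], one has traces(x := e; s, σ) = { (⟨σ⟩·⟨σ'⟩) ∗∗ τ' | τ' ∈ traces(s, σ') }. -/

import Mathlib

/-! # LAGC semantics: basic definitions

Program variables, values, expressions, starred expressions, symbolic states,
evaluation, concretisation, traces with events, the WHILE language with its
local evaluation (`valS`), the composition rule (`Step`), and global trace
semantics (`tracesOf`). -/

/-- Program variables. -/
abbrev Var := String

/-- Values: booleans and integers. -/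
inductive Val where
  | bool : Bool → Val
  | int  : Int → Val
deriving DecidableEq

/-- Binary operators. -/
inductive Op where
  | add | sub | mul | eqOp | lt
deriving DecidableEq

/-- Evaluation of the binary operators on values. -/
def applyOp : Op → Val → Val → Val
  | .add, .int a, .int b => .int (a + b)
  | .sub, .int a, .int b => .int (a - b)
  | .mul, .int a, .int b => .int (a * b)
  | .eqOp, a, b => .bool (decide (a = b))
  | .lt, .int a, .int b => .bool (decide (a < b))
  | _, _, _ => .int 0

/-- Expressions. -/
inductive Exp where
  | var : Var → Exp
  | val : Val → Exp
  | op  : Op → Exp → Exp → Exp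
deriving DecidableEq

/-- The set of variables occurring in an expression. -/
def Exp.vars : Exp → Set Var
  | .var x => {x}
  | .val _ => ∅
  | .op _ a b => a.vars ∪ b.vars

/-- Starred expressions: expressions extended with the symbol `∗`. -/
inductive Sexp where
  | star : Sexp
  | exp  : Exp → Sexp
deriving DecidableEq

/-- The set of variables occurring in a starred expression. -/
def Sexp.vars : Sexp → Set Var
  | .star => ∅
  | .exp e => e.vars

/-- A symbolic state: a partial map from variables to starred expressions. -/
abbrev SymState := Var → Option Sexp

/-- The domain of a symbolic state. -/
def domS (σ : SymState) : Set Var := {x | (σ x).isSome}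

/-- The symbolic variables of a state: those bound to `∗`. -/
def symbS (σ : SymState) : Set Var := {x | σ x = some .star}

/-- State update `σ[x ↦ se]`. -/
def updState (σ : SymState) (x : Var) (se : Sexp) : SymState :=
  fun y => if y = x then some se else σ y

/-- Well-formed state: every variable occurring in a value of the state is
a symbolic variable of the state. -/
def wfState (σ : SymState) : Prop :=
  ∀ y se, σ y = some se → Sexp.vars se ⊆ symbS σ

/-- Every defined variable is bound to a value (the paper's standing
assumption that states are simplified by propagation of concrete values). -/
def ValuedState (σ : SymState) : Prop :=
  ∀ x se, σ x = some se → ∃ v : Val, se = .exp (.val v)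

/-- A concrete, well-formed state: well-formed, no symbolic variables, and
(by the standing simplification assumption) every defined variable is bound
to a value. -/
def ConcreteState (σ : SymState) : Prop :=
  wfState σ ∧ symbS σ = ∅ ∧ ValuedState σ

/-- State extension `σ ⊆ σ'`. -/
def stateExtends (σ σ' : SymState) : Prop :=
  ∀ x se, σ x = some se → σ' x = some se

/-- The evaluation function `val_σ : Exp → Exp`. -/
def evalE (σ : SymState) : Exp → Exp
  | .var x =>
      match σ x with
      | some (.exp e) => e
      | _ => .var x
  | .val v => .val v
  | .op o a b =>
      match evalE σ a, evalE σ b with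
      | .val v1, .val v2 => .val (applyOp o v1 v2)
      | r1, r2 => .op o r1 r2

/-- A (partial) mapping of variables to values, viewed as a symbolic state. -/
def rhoState (ρ : Var → Option Val) : SymState :=
  fun x => (ρ x).map (fun v => .exp (.val v))

/-- Evaluation of a starred expression (`∗` is left untouched). -/
def evalSexp (σ : SymState) : Sexp → Sexp
  | .star => .star
  | .exp e => .exp (evalE σ e)

/-- `ρ` is a concretisation mapping for the state `σ`:
`dom(ρ) ∩ dom(σ) = symb(σ)`. -/
def ConcMap (ρ : Var → Option Val) (σ : SymState) : Prop :=
  {x | (ρ x).isSome} ∩ domS σ = symbS σ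

/-- The concretisation `ρ ∘ σ` of a state:
`ρ ∪ { x ↦ val_ρ(σ(x)) | x ∈ dom(σ) \ dom(ρ) }`. -/
def concretize (ρ : Var → Option Val) (σ : SymState) : SymState :=
  fun x =>
    match ρ x with
    | some v => some (.exp (.val v))
    | none => (σ x).map (evalSexp (rhoState ρ))

/-- Trace elements: symbolic states and event markers over lists of
expressions. -/
inductive TElem where
  | state : SymState → TElem
  | event : List Exp → TElem

/-- A possibly infinite symbolic trace, as a sequence of optional elements. -/
abbrev Trace := ℕ → Option TElem

/-- The finite trace given by a list, as a `Trace`. -/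
def ofList (l : List TElem) : Trace := fun n => l[n]?

/-- The states occurring in a trace. -/
def statesOf (τ : Trace) : Set SymState := {σ | ∃ n, τ n = some (.state σ)}

/-- The states occurring in a finite trace. -/
def listStates (l : List TElem) : Set SymState := {σ | TElem.state σ ∈ l}

/-- `V = ⋃_{σ ∈ τ} symb(σ)`: all symbolic variables of states of the trace. -/
def traceV (τ : Trace) : Set Var := ⋃ σ ∈ statesOf τ, symbS σ

/-- A path condition is a (finite) set of Boolean expressions; a conditioned
symbolic trace `pc ▷ τ` is well-formed if all its states are well-formed, no
variable symbolic somewhere is non-symbolic elsewhere, the path condition and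
events only mention symbolic variables of the trace, and every event is
immediately preceded and followed by one and the same state. -/
def wfTrace (pc : Set Exp) (τ : Trace) : Prop :=
  (∀ σ ∈ statesOf τ, wfState σ) ∧
  (∀ σ ∈ statesOf τ, (domS σ \ symbS σ) ∩ traceV τ = ∅) ∧
  (∀ e ∈ pc, Exp.vars e ⊆ traceV τ) ∧
  (∀ n es, τ n = some (.event es) → ∀ e ∈ es, Exp.vars e ⊆ traceV τ) ∧
  (∀ n es, τ n = some (.event es) →
    ∃ σ, 0 < n ∧ τ (n - 1) = some (.state σ) ∧ τ (n + 1) = some (.state σ))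

/-- Concretisation of a trace element. -/
def concElem (ρ : Var → Option Val) : TElem → TElem
  | .state σ => .state (concretize ρ σ)
  | .event es => .event (es.map (evalE (rhoState ρ)))

/-- Concretisation of a (possibly infinite) trace. -/
def concretizeT (ρ : Var → Option Val) (τ : Trace) : Trace :=
  fun n => (τ n).map (concElem ρ)

/-- Concretisation of a finite trace. -/
def concretizeL (ρ : Var → Option Val) (l : List TElem) : List TElem :=
  l.map (concElem ρ)

/-- `ρ` is a trace concretisation mapping for `τ`: a concretisation mapping
for every state of `τ`. -/
def TraceConcMap (ρ : Var → Option Val) (τ : Trace) : Prop :=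
  ∀ σ ∈ statesOf τ, ConcMap ρ σ

/-- `ρ` is a trace concretisation mapping for the finite trace `l`. -/
def TraceConcMapL (ρ : Var → Option Val) (l : List TElem) : Prop :=
  ∀ σ ∈ listStates l, ConcMap ρ σ

/-- Concretisation of a path condition: `val_ρ(pc)`. -/
def pcConc (ρ : Var → Option Val) (pc : Set Exp) : Set Exp :=
  (evalE (rhoState ρ)) '' pc

/-- A path condition is consistent if, fully evaluated, it does not
contain `ff`. -/
def pcConsistent (pc : Set Exp) : Prop :=
  ∀ e ∈ pc, evalE (fun _ => none) e ≠ .val (.bool false)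

/-! ## The WHILE language -/

/-- WHILE statements. -/
inductive Stmt where
  | skip   : Stmt
  | assign : Var → Exp → Stmt
  | ifS    : Exp → Stmt → Stmt
  | seq    : Stmt → Stmt → Stmt
  | whileS : Exp → Stmt → Stmt

/-- The variables of a statement. -/
def stmtVars : Stmt → Set Var
  | .skip => ∅
  | .assign x e => {x} ∪ e.vars
  | .ifS e s => e.vars ∪ stmtVars s
  | .seq a b => stmtVars a ∪ stmtVars b
  | .whileS e s => e.vars ∪ stmtVars s

/-- A conditioned continuation trace `pc ▷ τ · K(s')`; `k = none` is the
empty continuation `K(∘)`. -/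
structure CTrace where
  pc : Set Exp
  tr : List TElem
  k  : Option Stmt

/-- The Boolean expression `val_σ(e) = tt`. -/
def eqTT (σ : SymState) (e : Exp) : Exp :=
  .op .eqOp (evalE σ e) (.val (.bool true))

/-- The Boolean expression `val_σ(e) = ff`. -/
def eqFF (σ : SymState) (e : Exp) : Exp :=
  .op .eqOp (evalE σ e) (.val (.bool false))

/-- Continuation `K(r'; s)`, with the rewrite `∘; s ↝ s`. -/
def seqK : Option Stmt → Stmt → Option Stmt
  | none, s => some s
  | some r, s => some (.seq r s)

/-- Local evaluation of WHILE statements: `val_σ : Stmt → Set CTrace`.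
The `while` case is the unfolding `val_σ(while e {s}) = val_σ(if e {s; while e {s}})`. -/
def valS (σ : SymState) : Stmt → Set CTrace
  | .skip => {⟨∅, [.state σ], none⟩}
  | .assign x e =>
      {⟨∅, [.state σ, .state (updState σ x (.exp (evalE σ e)))], none⟩}
  | .ifS e s =>
      {⟨{eqTT σ e}, [.state σ], some s⟩, ⟨{eqFF σ e}, [.state σ], none⟩}
  | .whileS e s =>
      {⟨{eqTT σ e}, [.state σ], some (.seq s (.whileS e s))⟩,
       ⟨{eqFF σ e}, [.state σ], none⟩}
  | .seq r s => {ct | ∃ ct' ∈ valS σ r, ct = ⟨ct'.pc, ct'.tr, seqK ct'.k s⟩}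

/-- Local evaluation of continuations; the empty continuation evaluates to
the empty set of traces. -/
def valC (σ : SymState) : Option Stmt → Set CTrace
  | none => ∅
  | some s => valS σ s

/-- The semantic chop `τ₁ ∗∗ τ₂` on finite traces. -/
def chopL (τ₁ τ₂ : List TElem) : List TElem := τ₁.dropLast ++ τ₂

/-- Definedness of the semantic chop: `τ₁` ends with a state that is extended
by the first state of `τ₂`. -/
def ChopDefined (τ₁ τ₂ : List TElem) : Prop :=
  ∃ σ σ', τ₁.getLast? = some (.state σ) ∧ τ₂.head? = some (.state σ') ∧
    stateExtends σ σ'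

/-- Chop of a finite trace with a possibly infinite continuation trace. -/
def chopT (l : List TElem) (t : Trace) : Trace :=
  fun n => if n < l.length - 1 then l[n]? else t (n - (l.length - 1))

/-- A configuration of the composition rules: a finite (concrete) trace
together with a continuation. -/
abbrev Config := List TElem × Option Stmt

/-- The composition rule for WHILE: `(sh, K(s)) → (sh ∗∗ τ, K(s'))` whenever
`last(sh) = σ`, `pc ▷ τ·K(s') ∈ val_σ(s)` and `pc` is consistent. -/
def Step (c c' : Config) : Prop :=
  ∃ σ ct, c.1.getLast? = some (TElem.state σ) ∧
    ct ∈ valC σ c.2 ∧ pcConsistent ct.pc ∧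
    c' = (chopL c.1 ct.tr, ct.k)

/-- `t` is the limit of the growing sequence of finite traces `f`. -/
def IsLimit (f : ℕ → List TElem) (t : Trace) : Prop :=
  ∀ n, ∃ N, ∀ i, N ≤ i → (f i)[n]? = t n

/-- Global trace semantics `traces(s, σ)`: traces of maximal sequences of
applications of the composition rule starting at `(⟨σ⟩, K(s))`; for finite
maximal sequences (ending with the empty continuation) the resulting finite
trace, for infinite sequences the limit. -/
def tracesOf (s : Stmt) (σ : SymState) : Set Trace :=
  {t | (∃ sh : List TElem,
          Relation.ReflTransGen Step ([TElem.state σ], some s) (sh, none) ∧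
          t = ofList sh) ∨
       (∃ run : ℕ → Config, run 0 = ([TElem.state σ], some s) ∧
          (∀ n, Step (run n) (run (n + 1))) ∧
          IsLimit (fun n => (run n).1) t)}

open Classical in
/-- `σ[V ↦ ∗]`: bind every variable of `V` to `∗`. -/
noncomputable def updStarSet (σ : SymState) (V : Set Var) : SymState :=
  fun x => if x ∈ V then some Sexp.star else σ x

/-- The event trace `evTrio_V(σ, ē)` of length three: the state `σ`, the
event `ev(val_{σ'}(ē))`, and the state `σ' = σ[V ↦ ∗]`. -/
noncomputable def evTrio (σ : SymState) (es : List Exp) (V : Set Var) :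
    List TElem :=
  [.state σ, .event (es.map (evalE (updStarSet σ V))), .state (updStarSet σ V)]

/-! ## Auxiliary lemmas -/

lemma valS_head {σ : SymState} {st : Stmt} {ct : CTrace} (h : ct ∈ valS σ st) :
    ct.tr.head? = some (.state σ) := by
  induction st generalizing ct with
  | skip => simp only [valS, Set.mem_singleton_iff] at h; subst h; rfl
  | assign x e => simp only [valS, Set.mem_singleton_iff] at h; subst h; rfl
  | ifS e s ih => rcases h with h | h <;> subst h <;> rfl
  | whileS e s ih => rcases h with h | h <;> subst h <;> rfl
  | seq a b iha ihb =>
      obtain ⟨ct', h', rfl⟩ := h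
      have h2 := iha h'
      exact h2

lemma valS_tr_ne {σ : SymState} {st : Stmt} {ct : CTrace} (h : ct ∈ valS σ st) :
    ct.tr ≠ [] := by
  have := valS_head h
  intro hnil; rw [hnil] at this; simp at this

lemma valC_tr_ne {σ : SymState} {k : Option Stmt} {ct : CTrace}
    (h : ct ∈ valC σ k) : ct.tr ≠ [] := by
  cases k with
  | none => exact absurd h (Set.notMem_empty _)
  | some st => exact valS_tr_ne h

lemma chopL_ne {l tr : List TElem} (h : tr ≠ []) : chopL l tr ≠ [] := by
  simp [chopL, h]

lemma step_tr_ne {c c' : Config} (h : Step c c') : c'.1 ≠ [] := by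
  obtain ⟨σ, ct, _, hmem, _, rfl⟩ := h
  exact chopL_ne (valC_tr_ne hmem)

lemma step_cons_of {a : TElem} {b c : Config} (hne : b.1 ≠ []) (h : Step b c) :
    Step (a :: b.1, b.2) (a :: c.1, c.2) := by
  obtain ⟨σ, ct, hlast, hmem, hpc, rfl⟩ := h
  refine ⟨σ, ct, ?_, hmem, hpc, ?_⟩
  · obtain ⟨hd, tl, hb⟩ := List.exists_cons_of_ne_nil hne
    rw [hb] at hlast ⊢
    rwa [List.getLast?_cons_cons]
  · obtain ⟨hd, tl, hb⟩ := List.exists_cons_of_ne_nil hne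
    rw [hb]
    rfl

lemma step_cons {a : TElem} {l : List TElem} {k : Option Stmt} {c : Config}
    (hl : l ≠ []) (h : Step (a :: l, k) c) :
    ∃ l', l' ≠ [] ∧ c.1 = a :: l' ∧ Step (l, k) (l', c.2) := by
  obtain ⟨σ, ct, hlast, hmem, hpc, rfl⟩ := h
  obtain ⟨hd, tl, rfl⟩ := List.exists_cons_of_ne_nil hl
  refine ⟨chopL (hd :: tl) ct.tr, chopL_ne (valC_tr_ne hmem), ?_,
    σ, ct, ?_, hmem, hpc, rfl⟩
  · simp only [chopL]; rfl
  · rwa [List.getLast?_cons_cons] at hlast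

lemma rtg_cons {a : TElem} {l : List TElem} {k : Option Stmt} {c : Config}
    (hl : l ≠ []) (h : Relation.ReflTransGen Step (l, k) c) :
    c.1 ≠ [] ∧ Relation.ReflTransGen Step (a :: l, k) (a :: c.1, c.2) := by
  induction h with
  | refl => exact ⟨hl, Relation.ReflTransGen.refl⟩
  | tail hab hbc ih =>
      obtain ⟨hne, hrtg⟩ := ih
      exact ⟨step_tr_ne hbc, hrtg.tail (step_cons_of hne hbc)⟩

lemma rtg_cons_inv {a : TElem} {l : List TElem} {k : Option Stmt} {c : Config}
    (hl : l ≠ []) (h : Relation.ReflTransGen Step (a :: l, k) c) :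
    ∃ l', l' ≠ [] ∧ c.1 = a :: l' ∧
      Relation.ReflTransGen Step (l, k) (l', c.2) := by
  induction h with
  | refl => exact ⟨l, hl, rfl, Relation.ReflTransGen.refl⟩
  | @tail b c hab hbc ih =>
      obtain ⟨l', hne, hb1, hrtg⟩ := ih
      have hb : b = (a :: l', b.2) := Prod.ext hb1 rfl
      rw [hb] at hbc
      obtain ⟨l'', hne'', hc1, hs⟩ := step_cons hne hbc
      exact ⟨l'', hne'', hc1, hrtg.tail hs⟩

lemma step_init (σ : SymState) (x : Var) (e : Exp) (s : Stmt) (c : Config) :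
    Step ([TElem.state σ], some (.seq (.assign x e) s)) c ↔
      c = ([TElem.state σ, TElem.state (updState σ x (.exp (evalE σ e)))],
           some s) := by
  constructor
  · rintro ⟨σ₀, ct, hlast, hmem, hpc, rfl⟩
    have hσ₀ : σ₀ = σ := by
      simp only [List.getLast?_singleton, Option.some.injEq] at hlast
      cases hlast; rfl
    subst hσ₀
    simp only [valC, valS, Set.mem_setOf_eq, Set.mem_singleton_iff] at hmem
    obtain ⟨ct', rfl, rfl⟩ := hmem
    rfl
  · rintro rfl
    refine ⟨σ, ⟨∅, [TElem.state σ,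
        TElem.state (updState σ x (.exp (evalE σ e)))], some s⟩, rfl,
      ⟨⟨∅, [TElem.state σ,
        TElem.state (updState σ x (.exp (evalE σ e)))], none⟩, rfl, rfl⟩,
      ?_, rfl⟩
    intro e' he'
    exact absurd he' (Set.notMem_empty _)

lemma chopT_pair (a b : TElem) (t : Trace) :
    chopT [a, b] t = fun n => match n with | 0 => some a | n + 1 => t n := by
  funext n
  cases n with
  | zero => simp [chopT]
  | succ n => simp [chopT]

/-- Semantic equation for assignment: with
`σ' = σ[x ↦ val_σ(e)]`,
`traces(x := e; s, σ) = { (⟨σ⟩·⟨σ'⟩) ∗∗ τ' | τ' ∈ traces(s, σ') }`. -/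
theorem traces_assign_seq (σ : SymState) (hσ : ConcreteState σ)
    (x : Var) (e : Exp) (s : Stmt)
    (hs : stmtVars (.seq (.assign x e) s) ⊆ domS σ) :
    tracesOf (.seq (.assign x e) s) σ =
      (fun t => chopT
          [TElem.state σ, TElem.state (updState σ x (.exp (evalE σ e)))] t) ''
        tracesOf s (updState σ x (.exp (evalE σ e))) := by
  set σ' := updState σ x (.exp (evalE σ e)) with hσ'
  ext t
  simp only [Set.mem_image]
  constructor
  · rintro (⟨sh, hrtg, rfl⟩ | ⟨run, h0, hstep, hlim⟩)
    · -- finite case, forward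
      rcases Relation.ReflTransGen.cases_head hrtg with heq | ⟨b, hstep1, hrtg'⟩
      · exact absurd (congrArg Prod.snd heq) (by simp)
      · rw [step_init] at hstep1
        subst hstep1
        have h2 := rtg_cons_inv (a := TElem.state σ)
          (l := [TElem.state σ']) (by simp) hrtg'
        obtain ⟨sh', hne, hsh, hrtg''⟩ := h2
        have hsh2 : sh = TElem.state σ :: sh' := hsh
        subst hsh2
        refine ⟨ofList sh', Or.inl ⟨sh', hrtg'', rfl⟩, ?_⟩
        rw [chopT_pair]
        funext n
        cases n with
        | zero => simp [ofList]
        | succ n => simp [ofList]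
    · -- infinite case, forward
      have hinv : ∀ n, ∃ l, l ≠ [] ∧ (run (n + 1)).1 = TElem.state σ :: l := by
        intro n
        induction n with
        | zero =>
            have h1 := hstep 0
            rw [h0, step_init] at h1
            exact ⟨[TElem.state σ'], by simp, by rw [h1]⟩
        | succ n ih =>
            obtain ⟨l, hne, hl⟩ := ih
            have hrn : run (n + 1) = (TElem.state σ :: l, (run (n + 1)).2) :=
              Prod.ext hl rfl
            have h1 := hstep (n + 1)
            rw [hrn] at h1
            obtain ⟨l', hne', hc1, _⟩ := step_cons hne h1
            exact ⟨l', hne', hc1⟩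
      set run' : ℕ → Config :=
        fun n => ((run (n + 1)).1.tail, (run (n + 1)).2) with hrun'
      have hrun'eq : ∀ n, ∃ l, l ≠ [] ∧ (run (n + 1)).1 = TElem.state σ :: l ∧
          run' n = (l, (run (n + 1)).2) := by
        intro n
        obtain ⟨l, hne, hl⟩ := hinv n
        exact ⟨l, hne, hl, by simp [hrun', hl]⟩
      refine ⟨fun n => t (n + 1), Or.inr ⟨run', ?_, ?_, ?_⟩, ?_⟩
      · have h1 := hstep 0
        rw [h0, step_init] at h1
        simp [hrun', h1, hσ']
      · intro n
        obtain ⟨l, hne, hl, hr⟩ := hrun'eq n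
        have hrn : run (n + 1) = (TElem.state σ :: l, (run (n + 1)).2) :=
          Prod.ext hl rfl
        have h1 := hstep (n + 1)
        rw [hrn] at h1
        obtain ⟨l', hne', hc1, hs⟩ := step_cons hne h1
        have : run' (n + 1) = (l', (run (n + 2)).2) := by
          simp [hrun', hc1]
        rw [hr, this]
        exact hs
      · intro n
        obtain ⟨N, hN⟩ := hlim (n + 1)
        refine ⟨N, fun i hi => ?_⟩
        obtain ⟨l, hne, hl, hr⟩ := hrun'eq i
        have h3 := hN (i + 1) (le_trans hi (Nat.le_succ i))
        simp only [hl] at h3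
        show ((run' i).1)[n]? = t (n + 1)
        rw [hr]
        simpa using h3
      · rw [chopT_pair]
        funext n
        cases n with
        | zero =>
            obtain ⟨N, hN⟩ := hlim 0
            have := hN (N + 1) (Nat.le_succ N)
            obtain ⟨l, hne, hl⟩ := hinv N
            simp only [hl] at this
            simpa using this
        | succ n => rfl
  · rintro ⟨t', ht', rfl⟩
    rcases ht' with ⟨sh', hrtg, rfl⟩ | ⟨run', h0', hstep', hlim'⟩
    · -- finite case, backward
      refine Or.inl ⟨TElem.state σ :: sh', ?_, ?_⟩
      · have h2 := rtg_cons (a := TElem.state σ)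
          (l := [TElem.state σ']) (k := some s) (by simp) hrtg
        exact Relation.ReflTransGen.head
          ((step_init σ x e s _).mpr rfl) h2.2
      · rw [chopT_pair]
        funext n
        cases n with
        | zero => simp [ofList]
        | succ n => simp [ofList]
    · -- infinite case, backward
      have hne' : ∀ n, (run' n).1 ≠ [] := by
        intro n
        cases n with
        | zero => rw [h0']; simp
        | succ n => exact step_tr_ne (hstep' n)
      set run : ℕ → Config := fun n =>
        match n with
        | 0 => ([TElem.state σ], some (.seq (.assign x e) s))
        | n + 1 => (TElem.state σ :: (run' n).1, (run' n).2) with hrun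
      refine Or.inr ⟨run, rfl, ?_, ?_⟩
      · intro n
        cases n with
        | zero =>
            have : run 1 = ([TElem.state σ, TElem.state σ'], some s) := by
              simp [hrun, h0']
            rw [this]
            exact (step_init σ x e s _).mpr rfl
        | succ n =>
            exact step_cons_of (hne' n) (hstep' n)
      · intro n
        cases n with
        | zero =>
            refine ⟨1, fun i hi => ?_⟩
            obtain ⟨m, rfl⟩ := Nat.exists_eq_add_of_le hi
            rw [chopT_pair, Nat.add_comm]
            simp [hrun]
        | succ n =>
            obtain ⟨N, hN⟩ := hlim' n
            refine ⟨N + 1, fun i hi => ?_⟩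
            obtain ⟨m, rfl⟩ := Nat.exists_eq_add_of_le hi
            rw [chopT_pair]
            have := hN (N + m) (Nat.le_add_right N m)
            simpa [hrun, Nat.add_comm] using this
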